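/- For all φ, χ ∈ S(ℝ) and all (x, y) ∈ ℝ², one has (2πi)^{-1} ∫_{ℝ²} e^{i W_L(x,y;x',y')} φ(x') χ(y') dx' dy' = −i (π/2)^{1/2} · W(φ, conj(χ̂))(x/2, y/2), where W_L(x,y;x',y') = −(y x' + x y') + x' y' + (1/2) x y, χ̂ is the Fourier transform of χ, and conj denotes complex conjugation. (This identifies the intertwining operator for the Landau Hamiltonian with a rescaled cross-Wigner transform.) -/

import Mathlib

/-!
`W_L` is affine in `y'`, so the `y'`-integral is `√(2π) e^{i(xy/2 - yx')} φ(x') χ̂(x - x')`.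
The substitution `t = 2u - x` turns the cross-Wigner integral at `(x/2, y/2)` into the same
`u`-integral times `π⁻¹`, and the constants match since `√(2π) = 2√(π/2)` and `I⁻¹ = -I`.
-/

open MeasureTheory Complex
open scoped ComplexConjugate Real

noncomputable section

/-- The cross-Wigner transform (one dimension):
`W(φ,ψ)(x,ξ) = (2π)⁻¹ ∫ e^{-iξt} φ(x+t/2) conj(ψ(x−t/2)) dt`. -/
def crossWigner1 (φ ψ : ℝ → ℂ) (x ξ : ℝ) : ℂ :=
  ((2 * π)⁻¹ : ℝ) *
    ∫ t : ℝ, Complex.exp (-(Complex.I * ξ * t)) * φ (x + t / 2) * conj (ψ (x - t / 2))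

/-- The Fourier transform `χ̂(ξ) = (2π)^{-1/2} ∫ e^{-iξt} χ(t) dt`. -/
def fourier1 (χ : ℝ → ℂ) (ξ : ℝ) : ℂ :=
  ((Real.sqrt (2 * π))⁻¹ : ℝ) * ∫ t : ℝ, Complex.exp (-(Complex.I * ξ * t)) * χ t

/-- The generating quadratic form for the Landau intertwiner:
`W_L(x,y;x',y') = −(yx' + xy') + x'y' + xy/2`. -/
def WLandau (x y x' y' : ℝ) : ℝ := -(y * x' + x * y') + x' * y' + x * y / 2

theorem integral_exp_mul_eq_fourier1 (χ : ℝ → ℂ) (ξ : ℝ) :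
    ∫ t : ℝ, Complex.exp (-(Complex.I * ξ * t)) * χ t = (Real.sqrt (2 * π) : ℂ) * fourier1 χ ξ := by
  have h : (Real.sqrt (2 * π) : ℂ) ≠ 0 := by exact_mod_cast (by positivity : Real.sqrt (2 * π) ≠ 0)
  rw [fourier1, ofReal_inv, ← mul_assoc, mul_inv_cancel₀ h, one_mul]

theorem exp_I_WLandau (x y x' y' : ℝ) :
    Complex.exp (Complex.I * (WLandau x y x' y' : ℝ))
      = Complex.exp (Complex.I * (x * y / 2 - y * x' : ℝ)) *
          Complex.exp (-(Complex.I * (x - x' : ℝ) * y')) := by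
  rw [← Complex.exp_add, WLandau]
  congr 1
  push_cast
  ring

theorem integral_exp_I_WLandau_mul (φ χ : ℝ → ℂ) (x y x' : ℝ) :
    ∫ y' : ℝ, Complex.exp (Complex.I * (WLandau x y x' y' : ℝ)) * φ x' * χ y'
      = (Real.sqrt (2 * π) : ℂ) *
          (Complex.exp (Complex.I * (x * y / 2 - y * x' : ℝ)) * φ x' * fourier1 χ (x - x')) := by
  simp_rw [exp_I_WLandau, mul_comm _ (φ x'), ← mul_assoc, mul_assoc _ _ (χ _)]
  rw [integral_const_mul, integral_exp_mul_eq_fourier1]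
  ring

theorem integrable_exp_I_WLandau_mul (φ χ : SchwartzMap ℝ ℂ) (x y : ℝ) :
    Integrable (fun p : ℝ × ℝ => Complex.exp (Complex.I * (WLandau x y p.1 p.2 : ℝ)) * φ p.1 * χ p.2)
      (volume : Measure (ℝ × ℝ)) := by
  rw [Measure.volume_eq_prod]
  have hexp : Continuous fun p : ℝ × ℝ => Complex.exp (Complex.I * (WLandau x y p.1 p.2 : ℝ)) := by
    unfold WLandau; fun_prop
  simpa only [mul_assoc] using (φ.integrable.mul_prod χ.integrable).bdd_mul
    hexp.aestronglyMeasurable (c := 1)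
    (Filter.Eventually.of_forall fun p => by simp [Complex.norm_exp])

theorem crossWigner1_half (φ ψ : ℝ → ℂ) (x y : ℝ) :
    crossWigner1 φ ψ (x / 2) (y / 2)
      = (π : ℂ)⁻¹ * ∫ u : ℝ, Complex.exp (Complex.I * (x * y / 2 - y * u : ℝ)) * φ u * conj (ψ (x - u)) := by
  set g : ℝ → ℂ := fun t => Complex.exp (-(Complex.I * ((y / 2 : ℝ) : ℂ) * t)) *
    φ (x / 2 + t / 2) * conj (ψ (x / 2 - t / 2))
  have hsub : (fun u : ℝ => g (2 * u - x))
      = fun u => Complex.exp (Complex.I * (x * y / 2 - y * u : ℝ)) * φ u * conj (ψ (x - u)) := by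
    funext u
    simp only [g, show x / 2 + (2 * u - x) / 2 = u by ring, show x / 2 - (2 * u - x) / 2 = x - u by ring]
    congr 3
    push_cast
    ring
  have hscale : ∫ u : ℝ, g (2 * u - x) = 2⁻¹ * ∫ t : ℝ, g t := by
    rw [Measure.integral_comp_mul_left (fun s => g (s - x)) 2, integral_sub_right_eq_self g x]
    norm_num
  have hdef : crossWigner1 φ ψ (x / 2) (y / 2) = ((2 * π)⁻¹ : ℝ) * ∫ t : ℝ, g t := rfl
  rw [← hsub, hscale, hdef]
  push_cast
  ring

theorem stmt13 (φ χ : SchwartzMap ℝ ℂ) (x y : ℝ) :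
    (2 * (π : ℂ) * Complex.I)⁻¹ *
        ∫ p : ℝ × ℝ, Complex.exp (Complex.I * (WLandau x y p.1 p.2 : ℝ)) * φ p.1 * χ p.2
      = -Complex.I * (Real.sqrt (π / 2) : ℝ) *
          crossWigner1 φ (fun t => conj (fourier1 χ t)) (x / 2) (y / 2) := by
  have hint := integrable_exp_I_WLandau_mul φ χ x y
  rw [Measure.volume_eq_prod] at hint ⊢
  rw [integral_prod _ hint]
  simp only [integral_exp_I_WLandau_mul, integral_const_mul, crossWigner1_half, Complex.conj_conj]
  have hconst : (2 * (π : ℂ) * Complex.I)⁻¹ * (Real.sqrt (2 * π) : ℂ)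
      = -Complex.I * (Real.sqrt (π / 2) : ℝ) * (π : ℂ)⁻¹ := by
    have hsqrt : Real.sqrt (2 * π) = 2 * Real.sqrt (π / 2) := by
      rw [show 2 * π = 2 ^ 2 * (π / 2) by ring, Real.sqrt_mul (by norm_num), Real.sqrt_sq (by norm_num)]
    rw [hsqrt, ofReal_mul, mul_inv, mul_inv, inv_I]
    field_simp
    push_cast
    ring
  rw [← mul_assoc, hconst, mul_assoc]
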